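/- Let a : ℝ → ℝ be continuously differentiable, 1-periodic, and strictly positive. Then ⟨a⁻³a′·[[a·[[a⁻³a′]]]]⟩ = −(1/4)(⟨a⁻³⟩ + ⟨a⟩⟨a⁻²⟩² − 2⟨a⁻¹⟩⟨a⁻²⟩). (This is the closed form of the homogenization coefficient C₆, up to the factor 1/ρ⁽⁰⁾².) -/

import Mathlib

open MeasureTheory Matrix

/-- The mean of a function over one period: `⟨b⟩ = ∫₀¹ b(y) dy`. -/
noncomputable def pmean (b : ℝ → ℝ) : ℝ := ∫ y in (0:ℝ)..1, b y

/-- The fluctuating (mean-zero) part: `{b} = b − ⟨b⟩`. -/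
noncomputable def pfluct (b : ℝ → ℝ) : ℝ → ℝ := fun y => b y - pmean b

/-- The mean-zero primitive of the fluctuating part:
`[[b]](y) = ∫₀^y {b}(ξ) dξ − ∫₀¹ (∫₀^s {b}(ξ) dξ) ds`. -/
noncomputable def pbracket (b : ℝ → ℝ) : ℝ → ℝ :=
  fun y => (∫ ξ in (0:ℝ)..y, pfluct b ξ) - ∫ s in (0:ℝ)..1, (∫ ξ in (0:ℝ)..s, pfluct b ξ)

/-!
The integrand is `b · [[a [[b]]]]` with `b = a⁻³a′ = F′`, `F = -a⁻²/2`. Since `F` is periodic,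
`[[b]] = F - ⟨F⟩ = -(a⁻² - ⟨a⁻²⟩)/2`. Integrating by parts over a period, the two boundary terms
cancel and the mean-zero corrections drop out, so `⟨f [[g]]⟩ = -⟨[[f]] g⟩`. Hence the mean equals
`-⟨a [[b]]²⟩ = -⟨a (a⁻² - ⟨a⁻²⟩)²⟩/4`, and expanding the square gives the closed form.
-/

section Bracket

variable {f g F : ℝ → ℝ}

lemma pmean_const_mul (c : ℝ) : pmean (fun y => c * f y) = c * pmean f :=
  intervalIntegral.integral_const_mul c f

lemma pmean_add (hf : IntervalIntegrable f volume 0 1) (hg : IntervalIntegrable g volume 0 1) :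
    pmean (fun y => f y + g y) = pmean f + pmean g :=
  intervalIntegral.integral_add hf hg

lemma pmean_sub (hf : IntervalIntegrable f volume 0 1) (hg : IntervalIntegrable g volume 0 1) :
    pmean (fun y => f y - g y) = pmean f - pmean g :=
  intervalIntegral.integral_sub hf hg

lemma pmean_sub_const (c : ℝ) (hf : IntervalIntegrable f volume 0 1) :
    pmean (fun y => f y - c) = pmean f - c := by
  rw [pmean_sub hf intervalIntegrable_const]
  simp [pmean]

lemma pmean_pfluct (hf : IntervalIntegrable f volume 0 1) : pmean (pfluct f) = 0 :=
  (pmean_sub_const _ hf).trans (sub_self _)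

lemma integral_pfluct_eq_sub_of_hasDerivAt (hF : ∀ y, HasDerivAt F (f y) y)
    (hf : Continuous f) (y : ℝ) :
    ∫ ξ in (0:ℝ)..y, pfluct f ξ = F y - F 0 - y * pmean f := by
  simp only [pfluct]
  rw [intervalIntegral.integral_sub (hf.intervalIntegrable 0 y) intervalIntegrable_const,
    intervalIntegral.integral_eq_sub_of_hasDerivAt (fun x _ => hF x) (hf.intervalIntegrable 0 y)]
  simp

lemma hasDerivAt_pbracket (hf : Continuous f) (y : ℝ) :
    HasDerivAt (pbracket f) (pfluct f y) y := by
  have hfl : Continuous (pfluct f) := hf.sub continuous_const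
  exact (intervalIntegral.integral_hasDerivAt_right (hfl.intervalIntegrable 0 y)
    hfl.aestronglyMeasurable.stronglyMeasurableAtFilter hfl.continuousAt).sub_const _

lemma continuous_pbracket (hf : Continuous f) : Continuous (pbracket f) :=
  continuous_iff_continuousAt.2 fun y => (hasDerivAt_pbracket hf y).continuousAt

lemma pbracket_one (hf : Continuous f) : pbracket f 1 = pbracket f 0 := by
  have h1 : ∫ ξ in (0:ℝ)..1, pfluct f ξ = 0 := pmean_pfluct (hf.intervalIntegrable 0 1)
  simp [pbracket, h1]

lemma pmean_pbracket (hf : Continuous f) : pmean (pbracket f) = 0 := by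
  have hprim : Continuous fun s => ∫ ξ in (0:ℝ)..s, pfluct f ξ :=
    intervalIntegral.continuous_primitive (fun _ _ =>
      (hf.sub continuous_const).intervalIntegrable _ _) 0
  exact pmean_sub_const _ (hprim.intervalIntegrable 0 1) |>.trans (sub_self _)

lemma pbracket_eq_of_hasDerivAt (hF : ∀ y, HasDerivAt F (f y) y) (hf : Continuous f)
    (hper : F 1 = F 0) : pbracket f = fun y => F y - pmean F := by
  have hmean : pmean f = 0 := by
    rw [pmean, intervalIntegral.integral_eq_sub_of_hasDerivAt (fun x _ => hF x)
      (hf.intervalIntegrable 0 1), hper, sub_self]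
  have hFc : Continuous F := continuous_iff_continuousAt.2 fun y => (hF y).continuousAt
  funext y
  simp only [pbracket, integral_pfluct_eq_sub_of_hasDerivAt hF hf, hmean, mul_zero, sub_zero]
  rw [← pmean, pmean_sub_const _ (hFc.intervalIntegrable 0 1)]
  ring

lemma pmean_pfluct_mul {h : ℝ → ℝ} (hf : Continuous f) (hh : Continuous h)
    (h0 : pmean h = 0) : pmean (fun y => pfluct f y * h y) = pmean (fun y => f y * h y) := by
  have h0' : ∫ y in (0:ℝ)..1, h y = 0 := h0
  have hfh : IntervalIntegrable (fun y => f y * h y) volume 0 1 :=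
    (hf.mul hh).intervalIntegrable 0 1
  have hch : IntervalIntegrable (fun y => pmean f * h y) volume 0 1 :=
    (continuous_const.mul hh).intervalIntegrable 0 1
  simp only [pfluct, sub_mul]
  rw [pmean, intervalIntegral.integral_sub hfh hch, intervalIntegral.integral_const_mul, h0',
    mul_zero, sub_zero, pmean]

lemma pmean_mul_pbracket (hf : Continuous f) (hg : Continuous g) :
    pmean (fun y => f y * pbracket g y) = -pmean (fun y => pbracket f y * g y) := by
  have hbf := continuous_pbracket hf
  have hbg := continuous_pbracket hg
  have hparts := intervalIntegral.integral_mul_deriv_eq_deriv_mul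
    (fun x _ => hasDerivAt_pbracket hg x) (fun x _ => hasDerivAt_pbracket hf x)
    ((hg.sub continuous_const).intervalIntegrable 0 1)
    ((hf.sub continuous_const).intervalIntegrable 0 1)
  rw [pbracket_one hf, pbracket_one hg, sub_self, zero_sub] at hparts
  calc pmean (fun y => f y * pbracket g y)
      = pmean (fun y => pfluct f y * pbracket g y) :=
        (pmean_pfluct_mul hf hbg (pmean_pbracket hg)).symm
    _ = -pmean (fun y => pfluct g y * pbracket f y) := by
        simp only [pmean, mul_comm (pfluct f _)]
        exact hparts
    _ = -pmean (fun y => pbracket f y * g y) := by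
        rw [pmean_pfluct_mul hg hbf (pmean_pbracket hf)]
        simp only [mul_comm (g _)]

end Bracket

lemma hasDerivAt_neg_half_inv_sq {a : ℝ → ℝ} {y : ℝ} (hd : DifferentiableAt ℝ a y)
    (hy : a y ≠ 0) :
    HasDerivAt (fun y => -(1/2) * (a y ^ 2)⁻¹) ((a y ^ 3)⁻¹ * deriv a y) y := by
  refine (((hd.hasDerivAt.fun_pow 2).inv (pow_ne_zero 2 hy)).const_mul
    (-(1/2) : ℝ)).congr_deriv ?_
  field_simp
  ring

lemma pbracket_inv_cube_mul_deriv {a : ℝ → ℝ} (ha : ContDiff ℝ 1 a) (ha1 : a 1 = a 0)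
    (hne : ∀ y, a y ≠ 0) :
    pbracket (fun w => (a w ^ 3)⁻¹ * deriv a w)
      = fun y => -(1/2) * ((a y ^ 2)⁻¹ - pmean (fun y => (a y ^ 2)⁻¹)) := by
  have hcb : Continuous fun w => (a w ^ 3)⁻¹ * deriv a w :=
    ((ha.continuous.pow 3).inv₀ fun y => pow_ne_zero _ (hne y)).mul (ha.continuous_deriv le_rfl)
  rw [pbracket_eq_of_hasDerivAt
    (fun y => hasDerivAt_neg_half_inv_sq (ha.differentiable one_ne_zero y) (hne y)) hcb
    (by rw [ha1]), pmean_const_mul]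
  funext y
  ring

/-- For `a` continuously differentiable, 1-periodic and strictly positive,
`⟨a⁻³a′·[[a·[[a⁻³a′]]]]⟩ = −(1/4)(⟨a⁻³⟩ + ⟨a⟩⟨a⁻²⟩² − 2⟨a⁻¹⟩⟨a⁻²⟩)`. -/
theorem statement8 (a : ℝ → ℝ) (ha : ContDiff ℝ 1 a) (hper : Function.Periodic a 1)
    (hpos : ∀ y, 0 < a y) :
    pmean (fun y => (a y ^ 3)⁻¹ * deriv a y
        * pbracket (fun z => a z * pbracket (fun w => (a w ^ 3)⁻¹ * deriv a w) z) y)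
      = -(1/4) * (pmean (fun y => (a y ^ 3)⁻¹)
          + pmean a * (pmean (fun y => (a y ^ 2)⁻¹))^2
          - 2 * pmean (fun y => (a y)⁻¹) * pmean (fun y => (a y ^ 2)⁻¹)) := by
  have hne : ∀ y, a y ≠ 0 := fun y => (hpos y).ne'
  have hca : Continuous a := ha.continuous
  set b : ℝ → ℝ := fun w => (a w ^ 3)⁻¹ * deriv a w
  set m := pmean (fun y => (a y ^ 2)⁻¹)
  have hcb : Continuous b :=
    ((hca.pow 3).inv₀ fun y => pow_ne_zero _ (hne y)).mul (ha.continuous_deriv le_rfl)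
  have hbracket : pbracket b = fun y => -(1/2) * ((a y ^ 2)⁻¹ - m) :=
    pbracket_inv_cube_mul_deriv ha (by simpa using hper 0) hne
  have hi3 : IntervalIntegrable (fun y => (a y ^ 3)⁻¹) volume 0 1 :=
    ((hca.pow 3).inv₀ fun y => pow_ne_zero _ (hne y)).intervalIntegrable 0 1
  have hi1 : IntervalIntegrable (fun y => 2 * m * (a y)⁻¹) volume 0 1 :=
    (continuous_const.mul (hca.inv₀ hne)).intervalIntegrable 0 1
  have hia : IntervalIntegrable (fun y => m ^ 2 * a y) volume 0 1 :=
    (continuous_const.mul hca).intervalIntegrable 0 1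
  calc pmean (fun y => b y * pbracket (fun z => a z * pbracket b z) y)
      = -pmean (fun y => pbracket b y * (a y * pbracket b y)) :=
        pmean_mul_pbracket hcb (hca.mul (continuous_pbracket hcb))
    _ = -((1/4) * pmean (fun y => (a y ^ 3)⁻¹ - 2 * m * (a y)⁻¹ + m ^ 2 * a y)) := by
        rw [hbracket, ← pmean_const_mul]
        congr 2
        funext y
        field_simp [hne y]
        ring
    _ = _ := by
        rw [pmean_add (hi3.sub hi1) hia, pmean_sub hi3 hi1, pmean_const_mul, pmean_const_mul]
        ring
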